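/- Fix p ∈ (1,2) and let u(x) = x/|x| for x ∈ ℝ²∖{0}, with derivative Du(x) = I/|x| − (x⊗x)/|x|³. Then for every x ≠ 0: A(x/|x|)·Du(x) = 2I/|x| + (2(p−1)/(2−p))·(x⊗x)/|x|³ and A(x/|x|)(Du(x),Du(x)) = 2/|x|². -/

import Mathlib

open MeasureTheory Metric Set Filter RealInnerProductSpace

noncomputable section

abbrev Euc (n : ℕ) := EuclideanSpace ℝ (Fin n)
abbrev Mat (N n : ℕ) := EuclideanSpace ℝ (Fin N × Fin n)

/-- Partial derivative `∂φ/∂x_κ` of a scalar test function. -/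
def pd {n : ℕ} (φ : Euc n → ℝ) (κ : Fin n) (x : Euc n) : ℝ :=
  fderiv ℝ φ x (EuclideanSpace.single κ 1)

/-- `G` is the weak gradient of `u` on `Ω`. -/
def IsWeakGradient {n N : ℕ} (Ω : Set (Euc n)) (u : Euc n → Euc N)
    (G : Euc n → Mat N n) : Prop :=
  Measurable G ∧
  ∀ φ : Euc n → ℝ, ContDiff ℝ (⊤ : ℕ∞) φ → HasCompactSupport φ → tsupport φ ⊆ Ω →
    ∀ i κ, ∫ x in Ω, u x i * pd φ κ x = - ∫ x in Ω, G x (i, κ) * φ x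

/-- `u ∈ W^{1,p}(Ω, ℝ^N)` with weak gradient `G`. -/
def MemW1p {n N : ℕ} (Ω : Set (Euc n)) (p : ℝ) (u : Euc n → Euc N)
    (G : Euc n → Mat N n) : Prop :=
  MemLp u (ENNReal.ofReal p) (volume.restrict Ω) ∧
  MemLp G (ENNReal.ofReal p) (volume.restrict Ω) ∧
  IsWeakGradient Ω u G

/-- classical gradient matrix of a smooth map -/
def smoothGrad {n N : ℕ} (φ : Euc n → Euc N) (x : Euc n) : Mat N n :=
  WithLp.toLp 2 (fun iκ => fderiv ℝ (fun y => φ y iκ.1) x (EuclideanSpace.single iκ.2 1))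

/-- `w ∈ W₀^{1,p}(Ω,ℝ^N)` -/
def MemW10 {n N : ℕ} (Ω : Set (Euc n)) (p : ℝ) (w : Euc n → Euc N) : Prop :=
  ∃ G, MemW1p Ω p w G ∧
    ∃ φ : ℕ → Euc n → Euc N,
      (∀ k, ContDiff ℝ (⊤ : ℕ∞) (φ k) ∧ HasCompactSupport (φ k) ∧ tsupport (φ k) ⊆ Ω) ∧
      Tendsto (fun k =>
          eLpNorm (fun x => w x - φ k x) (ENNReal.ofReal p) (volume.restrict Ω)
          + eLpNorm (fun x => G x - smoothGrad (φ k) x) (ENNReal.ofReal p) (volume.restrict Ω))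
        atTop (nhds 0)


/-- The map `u(x) = x/|x|`. -/
def uu (x : Euc 2) : Euc 2 := ‖x‖⁻¹ • x

/-- The pointwise derivative matrix of `x ↦ x/|x|`:
`Du(x)_{iκ} = δ_{iκ}/|x| − x_i x_κ/|x|³`. -/
def Dumat (x : Euc 2) : Mat 2 2 :=
  WithLp.toLp 2 (fun iκ => (if iκ.1 = iκ.2 then ‖x‖⁻¹ else 0) - x iκ.1 * x iκ.2 / ‖x‖ ^ 3)

/-- Kronecker delta. -/
def kd (i j : Fin 2) : ℝ := if i = j then 1 else 0

/-- The coefficients `A^{κλ}_{ij}(u)` of the bilinear form of Giusti–Miranda type. -/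
def Acoef (p : ℝ) (u : Euc 2) (κ l i j : Fin 2) : ℝ :=
  kd κ l * kd i j +
    (kd κ i + 2 * p / (2 - p) * (u i * u κ) / (1 + ‖u‖ ^ 2)) *
    (kd l j + 2 * p / (2 - p) * (u j * u l) / (1 + ‖u‖ ^ 2))

/-- The bilinear form `A(u)(z,w)`. -/
def Abil (p : ℝ) (u : Euc 2) (z w : Mat 2 2) : ℝ :=
  ∑ κ, ∑ l, ∑ i, ∑ j, Acoef p u κ l i j * z (i, κ) * w (j, l)

/-- The matrix `A(u)z`, defined by `(A(u)z)·w = A(u)(z,w)` for all `w`. -/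
def Amat (p : ℝ) (u : Euc 2) (z : Mat 2 2) : Mat 2 2 :=
  WithLp.toLp 2 (fun jl => ∑ κ, ∑ i, Acoef p u κ jl.2 i jl.1 * z (i, κ))

/-- `T_u(z) = Tr z + (2p/(2−p)) (z·u⊗u)/(1+|u|²)`. -/
def Tmap (p : ℝ) (u : Euc 2) (z : Mat 2 2) : ℝ :=
  (∑ i, z (i, i)) + 2 * p / (2 - p) * (∑ i, ∑ κ, z (i, κ) * (u i * u κ)) / (1 + ‖u‖ ^ 2)

/-- The constant `m_g`. -/
def mg (p : ℝ) (g : ℝ → ℝ) : ℝ :=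
  (p - 1)⁻¹ * (1 + ⨆ s : ℝ, (|deriv g s| + 2 * |deriv (deriv g) s * s|))

/-- Admissibility of the cut-off function `g`: a smooth, even function `ℝ → [0,1]`
with `g(0) = 1` and `g ≡ 0` outside `(-1,1)`. -/
def GoodCutoff (g : ℝ → ℝ) : Prop :=
  ContDiff ℝ (⊤ : ℕ∞) g ∧ (∀ s, g s ∈ Set.Icc (0:ℝ) 1) ∧ (∀ s, g (-s) = g s) ∧
    g 0 = 1 ∧ ∀ s : ℝ, 1 ≤ |s| → g s = 0

/-- The integrand `f(x,z) = (g(|z|²) + m_g A(x/|x|)(z,z))^{p/2}`. -/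
def fInt (p : ℝ) (g : ℝ → ℝ) (x : Euc 2) (z : Mat 2 2) : ℝ :=
  (g (‖z‖ ^ 2) + mg p g * Abil p (‖x‖⁻¹ • x) z z) ^ (p / 2)

/-- The coefficients `a(v,z) = (g(|z|²) + m_g A(v)(z,z))^{(p−2)/2} A(v)z`. -/
def acoef (p : ℝ) (g : ℝ → ℝ) (v : Euc 2) (z : Mat 2 2) : Mat 2 2 :=
  (g (‖z‖ ^ 2) + mg p g * Abil p v z z) ^ ((p - 2) / 2) • Amat p v z

set_option maxHeartbeats 4000000 in
/-- with `u(x) = x/|x|` and `Du(x) = I/|x| − x⊗x/|x|³`, one has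
`A(x/|x|)Du(x) = 2I/|x| + (2(p−1)/(2−p)) x⊗x/|x|³` and `A(x/|x|)(Du(x),Du(x)) = 2/|x|²`. -/
theorem statement17 (p : ℝ) (hp : p ∈ Set.Ioo (1:ℝ) 2) (x : Euc 2) (hx : x ≠ 0) :
    Amat p (‖x‖⁻¹ • x) (Dumat x) =
      (WithLp.toLp 2 (fun iκ : Fin 2 × Fin 2 =>
        2 * kd iκ.1 iκ.2 / ‖x‖ + 2 * (p - 1) / (2 - p) * (x iκ.1 * x iκ.2) / ‖x‖ ^ 3) :
        Mat 2 2) ∧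
    Abil p (‖x‖⁻¹ • x) (Dumat x) (Dumat x) = 2 / ‖x‖ ^ 2 := by
  have hr : ‖x‖ ≠ 0 := norm_ne_zero_iff.mpr hx
  have hu : ‖‖x‖⁻¹ • x‖ = 1 := by rw [norm_smul]; simp [inv_mul_cancel₀ hr]
  have hn : x 0 ^ 2 + x 1 ^ 2 = ‖x‖ ^ 2 := by
    rw [EuclideanSpace.norm_eq, Real.sq_sqrt (by positivity)]
    simp [Fin.sum_univ_two, sq_abs]
  have h2p : (2:ℝ) - p ≠ 0 := by
    simp only [Set.mem_Ioo] at hp; intro h; linarith [hp.2]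
  have ht : ((‖x‖⁻¹ - x 0 * x 0 / ‖x‖ ^ 3) + (‖x‖⁻¹ - x 1 * x 1 / ‖x‖ ^ 3)) = ‖x‖⁻¹ := by
    field_simp; linear_combination -1 * hn
  have hq : ((‖x‖⁻¹ - x 0 * x 0 / ‖x‖ ^ 3) * (x 0 * x 0) + (-(x 0 * x 1 / ‖x‖ ^ 3)) * (x 0 * x 1) + (-(x 1 * x 0 / ‖x‖ ^ 3)) * (x 1 * x 0) + (‖x‖⁻¹ - x 1 * x 1 / ‖x‖ ^ 3) * (x 1 * x 1)) = 0 := by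
    field_simp; linear_combination -(x 0 ^ 2 + x 1 ^ 2) * hn
  have hstep00 : (‖x‖⁻¹ - x 0 * x 0 / ‖x‖ ^ 3) + (1 + 2 * p / (2 - p) * (‖x‖⁻¹ * x 0 * (‖x‖⁻¹ * x 0)) / 2) * ‖x‖⁻¹
      = 2 / ‖x‖ + 2 * (p - 1) / (2 - p) * (x 0 * x 0) / ‖x‖ ^ 3 := by
    field_simp; ring
  have hstep11 : (‖x‖⁻¹ - x 1 * x 1 / ‖x‖ ^ 3) + (1 + 2 * p / (2 - p) * (‖x‖⁻¹ * x 1 * (‖x‖⁻¹ * x 1)) / 2) * ‖x‖⁻¹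
      = 2 / ‖x‖ + 2 * (p - 1) / (2 - p) * (x 1 * x 1) / ‖x‖ ^ 3 := by
    field_simp; ring
  have hstep01 : (-(x 0 * x 1 / ‖x‖ ^ 3)) + (2 * p / (2 - p) * (‖x‖⁻¹ * x 0 * (‖x‖⁻¹ * x 1)) / 2) * ‖x‖⁻¹
      = 2 * (p - 1) / (2 - p) * (x 0 * x 1) / ‖x‖ ^ 3 := by
    field_simp; ring
  have hstep2 : ((‖x‖⁻¹ - x 0 * x 0 / ‖x‖ ^ 3) * (‖x‖⁻¹ - x 0 * x 0 / ‖x‖ ^ 3)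
      + (x 0 * x 1 / ‖x‖ ^ 3) * (x 0 * x 1 / ‖x‖ ^ 3)
      + (x 1 * x 0 / ‖x‖ ^ 3) * (x 1 * x 0 / ‖x‖ ^ 3)
      + (‖x‖⁻¹ - x 1 * x 1 / ‖x‖ ^ 3) * (‖x‖⁻¹ - x 1 * x 1 / ‖x‖ ^ 3))
      + ‖x‖⁻¹ * ‖x‖⁻¹ = 2 / ‖x‖ ^ 2 := by
    field_simp; linear_combination (x 0 ^ 2 + x 1 ^ 2 - ‖x‖^2) * hn
  have h00 : Amat p (‖x‖⁻¹ • x) (Dumat x) (0, 0) =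
      2 * kd 0 0 / ‖x‖ + 2 * (p - 1) / (2 - p) * (x 0 * x 0) / ‖x‖ ^ 3 := by
    simp only [Amat, Acoef, kd, Dumat, Fin.sum_univ_two, hu, PiLp.smul_apply, smul_eq_mul, PiLp.toLp_apply]
    norm_num
    linear_combination (norm := ring) (1 + 2 * p / (2 - p) * (‖x‖⁻¹ * x 0 * (‖x‖⁻¹ * x 0)) / 2) * ht + ((p / (2 - p) * ‖x‖⁻¹ * ‖x‖⁻¹) * (1 + 2 * p / (2 - p) * (‖x‖⁻¹ * x 0 * (‖x‖⁻¹ * x 0)) / 2)) * hq + hstep00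
  have h01 : Amat p (‖x‖⁻¹ • x) (Dumat x) (0, 1) =
      2 * kd 0 1 / ‖x‖ + 2 * (p - 1) / (2 - p) * (x 0 * x 1) / ‖x‖ ^ 3 := by
    simp only [Amat, Acoef, kd, Dumat, Fin.sum_univ_two, hu, PiLp.smul_apply, smul_eq_mul, PiLp.toLp_apply]
    norm_num
    linear_combination (norm := ring) (2 * p / (2 - p) * (‖x‖⁻¹ * x 0 * (‖x‖⁻¹ * x 1)) / 2) * ht + ((p / (2 - p) * ‖x‖⁻¹ * ‖x‖⁻¹) * (2 * p / (2 - p) * (‖x‖⁻¹ * x 0 * (‖x‖⁻¹ * x 1)) / 2)) * hq + hstep01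
  have h10 : Amat p (‖x‖⁻¹ • x) (Dumat x) (1, 0) =
      2 * kd 1 0 / ‖x‖ + 2 * (p - 1) / (2 - p) * (x 1 * x 0) / ‖x‖ ^ 3 := by
    simp only [Amat, Acoef, kd, Dumat, Fin.sum_univ_two, hu, PiLp.smul_apply, smul_eq_mul, PiLp.toLp_apply]
    norm_num
    linear_combination (norm := ring) (2 * p / (2 - p) * (‖x‖⁻¹ * x 1 * (‖x‖⁻¹ * x 0)) / 2) * ht + ((p / (2 - p) * ‖x‖⁻¹ * ‖x‖⁻¹) * (2 * p / (2 - p) * (‖x‖⁻¹ * x 1 * (‖x‖⁻¹ * x 0)) / 2)) * hq + hstep01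
  have h11 : Amat p (‖x‖⁻¹ • x) (Dumat x) (1, 1) =
      2 * kd 1 1 / ‖x‖ + 2 * (p - 1) / (2 - p) * (x 1 * x 1) / ‖x‖ ^ 3 := by
    simp only [Amat, Acoef, kd, Dumat, Fin.sum_univ_two, hu, PiLp.smul_apply, smul_eq_mul, PiLp.toLp_apply]
    norm_num
    linear_combination (norm := ring) (1 + 2 * p / (2 - p) * (‖x‖⁻¹ * x 1 * (‖x‖⁻¹ * x 1)) / 2) * ht + ((p / (2 - p) * ‖x‖⁻¹ * ‖x‖⁻¹) * (1 + 2 * p / (2 - p) * (‖x‖⁻¹ * x 1 * (‖x‖⁻¹ * x 1)) / 2)) * hq + hstep11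
  refine ⟨PiLp.ext fun iκ => ?_, ?_⟩
  · obtain ⟨i, κ⟩ := iκ
    fin_cases i <;> fin_cases κ
    · exact h00
    · exact h01
    · exact h10
    · exact h11
  · simp only [Abil, Acoef, kd, Dumat, Fin.sum_univ_two, hu, PiLp.smul_apply, smul_eq_mul, PiLp.toLp_apply]
    norm_num
    linear_combination (norm := ring) (((‖x‖⁻¹ - x 0 * x 0 / ‖x‖ ^ 3) + (‖x‖⁻¹ - x 1 * x 1 / ‖x‖ ^ 3)) + (p / (2 - p) * ‖x‖⁻¹ * ‖x‖⁻¹) * ((‖x‖⁻¹ - x 0 * x 0 / ‖x‖ ^ 3) * (x 0 * x 0) + (-(x 0 * x 1 / ‖x‖ ^ 3)) * (x 0 * x 1) + (-(x 1 * x 0 / ‖x‖ ^ 3)) * (x 1 * x 0) + (‖x‖⁻¹ - x 1 * x 1 / ‖x‖ ^ 3) * (x 1 * x 1)) + ‖x‖⁻¹) * ht + ((p / (2 - p) * ‖x‖⁻¹ * ‖x‖⁻¹) * (((‖x‖⁻¹ - x 0 * x 0 / ‖x‖ ^ 3) + (‖x‖⁻¹ - x 1 * x 1 / ‖x‖ ^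 3)) + (p / (2 - p) * ‖x‖⁻¹ * ‖x‖⁻¹) * ((‖x‖⁻¹ - x 0 * x 0 / ‖x‖ ^ 3) * (x 0 * x 0) + (-(x 0 * x 1 / ‖x‖ ^ 3)) * (x 0 * x 1) + (-(x 1 * x 0 / ‖x‖ ^ 3)) * (x 1 * x 0) + (‖x‖⁻¹ - x 1 * x 1 / ‖x‖ ^ 3) * (x 1 * x 1)) + ‖x‖⁻¹)) * hq + hstep2
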